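/- arXiv:1012.1415 — 2 statements merged into one kernel-verified Lean document; each statement's English description precedes it below -/
import Mathlib

section
/- Let A and M be abelian groups, let ξ : A³ → M satisfy ξ(0,y,z) = ξ(x,0,z) = ξ(x,y,0) = 0 and the cocycle condition (S1) ξ(y,z,t) − ξ(x+y,z,t) + ξ(x,y+z,t) − ξ(x,y,z+t) + ξ(x,y,z) = 0, and let η : A² → M satisfy (S2) ξ(x,y,z) − ξ(x,z,y) + ξ(z,x,y) + η(x+y,z) − η(x,z) − η(y,z) = 0 and (S3) η(x,y) + η(y,x) = 0 for all x,y,z,t ∈ A. Then the groupoid 𝒮 is a symmetric monoidal category with tensor product x ⊕ y := x + y on objects and (x,a) ⊕ (y,b) := (x+y, a+b) on morphisms, unit object 0, identity left and right unit constraints, associativity constraint (x⊕y)⊕z ≅ x⊕(y⊕z) whose inverse morphism has component ξ(x,y,z) (i.e. the inverse is the morphism (x+y+z, ξ(x,y,z))), and symmetry x⊕y → y⊕x given by the morphism (x+y, η(x,y)). Moreover every morphism of 𝒮 is invertible and every object x satisfies x ⊕ (−x) = 0, so 𝒮 is a symmetric categorical group. -/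
/-!
STATEMENT 5: Let `A` and `M` be abelian groups, let `ξ : A³ → M` satisfy
`ξ(0,y,z) = ξ(x,0,z) = ξ(x,y,0) = 0` and the cocycle condition (S1)
`ξ(y,z,t) − ξ(x+y,z,t) + ξ(x,y+z,t) − ξ(x,y,z+t) + ξ(x,y,z) = 0`, and let `η : A² → M`
satisfy (S2) `ξ(x,y,z) − ξ(x,z,y) + ξ(z,x,y) + η(x+y,z) − η(x,z) − η(y,z) = 0` and
(S3) `η(x,y) + η(y,x) = 0` for all `x,y,z,t ∈ A`. Then the groupoid `𝒮` is a symmetric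
monoidal category with tensor product `x ⊕ y := x + y` on objects and
`(x,a) ⊕ (y,b) := (x+y, a+b)` on morphisms, unit object `0`, identity left and right
unit constraints, associativity constraint `(x⊕y)⊕z ≅ x⊕(y⊕z)` whose inverse morphism
has component `ξ(x,y,z)` (i.e. the inverse is the morphism `(x+y+z, ξ(x,y,z))`), and
symmetry `x⊕y → y⊕x` given by the morphism `(x+y, η(x,y))`. Moreover every morphism of
`𝒮` is invertible and every object `x` satisfies `x ⊕ (−x) = 0`, so `𝒮` is a symmetric
categorical group.
-/

open CategoryTheory MonoidalCategory

/-- Objects of the groupoid `𝒮`: the elements of `A` (the parameter `M` is a phantom). -/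
structure GObj (A M : Type) where
  base : A

/-- Morphisms of the groupoid `𝒮`: a morphism `a → b` exists only when `a = b`, and is
given by an element of `M`. -/
structure GHom {A M : Type} (a b : GObj A M) where
  eq : a.base = b.base
  val : M

theorem GHom.ext' {A M : Type} {a b : GObj A M} {f g : GHom a b}
    (h : f.val = g.val) : f = g := by
  cases f; cases g; cases h; rfl

variable (A M : Type)

instance GObj.category [AddCommGroup M] : Category (GObj A M) where
  Hom a b := GHom a b
  id a := ⟨rfl, 0⟩
  comp f g := ⟨f.eq.trans g.eq, f.val + g.val⟩
  id_comp f := GHom.ext' (zero_add _)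
  comp_id f := GHom.ext' (add_zero _)
  assoc f g h := GHom.ext' (add_assoc _ _ _)

/-- The monoidal structure on `𝒮` determined by the associativity data `ξ` : the tensor
product is the addition of `A`, `(x,a) ⊕ (y,b) = (x+y, a+b)`, the unit is `0` with
identity unit constraints, and the associator is the isomorphism whose inverse is
`(x+y+z, ξ(x,y,z))`. -/
def gAddStruct [AddCommGroup A] [AddCommGroup M] (ξ : A → A → A → M) :
    MonoidalCategoryStruct (GObj A M) where
  tensorObj a b := ⟨a.base + b.base⟩
  whiskerLeft a _ _ f := ⟨by dsimp; rw [f.eq], f.val⟩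
  whiskerRight f b := ⟨by dsimp; rw [f.eq], f.val⟩
  tensorHom f g := ⟨by dsimp; rw [f.eq, g.eq], f.val + g.val⟩
  tensorUnit := ⟨0⟩
  associator a b c :=
    { hom := ⟨add_assoc a.base b.base c.base, -ξ a.base b.base c.base⟩
      inv := ⟨(add_assoc a.base b.base c.base).symm, ξ a.base b.base c.base⟩
      hom_inv_id := GHom.ext' (neg_add_cancel _)
      inv_hom_id := GHom.ext' (add_neg_cancel _) }
  leftUnitor a :=
    { hom := ⟨zero_add a.base, 0⟩
      inv := ⟨(zero_add a.base).symm, 0⟩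
      hom_inv_id := GHom.ext' (zero_add 0)
      inv_hom_id := GHom.ext' (zero_add 0) }
  rightUnitor a :=
    { hom := ⟨add_zero a.base, 0⟩
      inv := ⟨(add_zero a.base).symm, 0⟩
      hom_inv_id := GHom.ext' (zero_add 0)
      inv_hom_id := GHom.ext' (zero_add 0) }

/-!
A morphism of `𝒮` is determined by its `M`-component, and composition, whiskering and tensor
product all add components. Hence every axiom of a symmetric monoidal category becomes an
identity in `M`: naturality holds because `M` is commutative, the pentagon is the cocycle
condition (S1), the triangle is the normalisation `ξ(x,0,z) = 0`, the two hexagons are (S2)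
(the forward one after rewriting `η` through (S3)), and the symmetry axiom is (S3). Inverses
are given by negating the component.
-/

variable {A M}

namespace GObj

variable [AddCommGroup M]

lemma eq_of_hom {a b : GObj A M} (f : a ⟶ b) : a = b := by
  cases a; cases b; cases f.eq; rfl

instance isIso {a b : GObj A M} (f : a ⟶ b) : IsIso f :=
  ⟨⟨f.eq.symm, -f.val⟩, GHom.ext' (add_neg_cancel _), GHom.ext' (neg_add_cancel _)⟩

end GObj

abbrev gMonoidalCategory [AddCommGroup A] [AddCommGroup M] (ξ : A → A → A → M)
    (hξ : ∀ x z : A, ξ x 0 z = 0)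
    (hS1 : ∀ x y z t : A,
      ξ y z t - ξ (x + y) z t + ξ x (y + z) t - ξ x y (z + t) + ξ x y z = 0) :
    MonoidalCategory (GObj A M) where
  toMonoidalCategoryStruct := gAddStruct A M ξ
  tensorHom_def _ _ := GHom.ext' rfl
  id_tensorHom_id _ _ := GHom.ext' (add_zero 0)
  tensorHom_comp_tensorHom _ _ _ _ := GHom.ext' (add_add_add_comm _ _ _ _)
  whiskerLeft_id _ _ := GHom.ext' rfl
  id_whiskerRight _ _ := GHom.ext' rfl
  associator_naturality f₁ f₂ f₃ := by
    obtain rfl := GObj.eq_of_hom f₁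
    obtain rfl := GObj.eq_of_hom f₂
    obtain rfl := GObj.eq_of_hom f₃
    apply GHom.ext'
    show f₁.val + f₂.val + f₃.val + _ = _ + (f₁.val + (f₂.val + f₃.val))
    abel
  leftUnitor_naturality _ := GHom.ext' (add_comm _ _)
  rightUnitor_naturality _ := GHom.ext' (add_comm _ _)
  pentagon := by
    rintro ⟨w⟩ ⟨x⟩ ⟨y⟩ ⟨z⟩
    apply GHom.ext'
    show -ξ w x y + (-ξ w (x + y) z + -ξ x y z) = -ξ (w + x) y z + -ξ w x (y + z)
    linear_combination (norm := abel1) -hS1 w x y z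
  triangle := by
    rintro ⟨x⟩ ⟨y⟩
    apply GHom.ext'
    show -ξ x 0 y + 0 = 0
    rw [hξ, neg_zero, add_zero]

abbrev gSymmetricCategory [AddCommGroup A] [AddCommGroup M]
    (ξ : A → A → A → M) (η : A → A → M)
    (hξ : ∀ x z : A, ξ x 0 z = 0)
    (hS1 : ∀ x y z t : A,
      ξ y z t - ξ (x + y) z t + ξ x (y + z) t - ξ x y (z + t) + ξ x y z = 0)
    (hS2 : ∀ x y z : A,
      ξ x y z - ξ x z y + ξ z x y + η (x + y) z - η x z - η y z = 0)
    (hS3 : ∀ x y : A, η x y + η y x = 0) :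
    letI := gMonoidalCategory ξ hξ hS1
    SymmetricCategory (GObj A M) :=
  letI := gMonoidalCategory ξ hξ hS1
  { braiding a b :=
      { hom := ⟨add_comm a.base b.base, η a.base b.base⟩
        inv := ⟨add_comm b.base a.base, η b.base a.base⟩
        hom_inv_id := GHom.ext' (hS3 a.base b.base)
        inv_hom_id := GHom.ext' (hS3 b.base a.base) }
    braiding_naturality_right _ _ _ f := by
      obtain rfl := GObj.eq_of_hom f
      exact GHom.ext' (add_comm _ _)
    braiding_naturality_left f _ := by
      obtain rfl := GObj.eq_of_hom f
      exact GHom.ext' (add_comm _ _)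
    hexagon_forward := by
      rintro ⟨x⟩ ⟨y⟩ ⟨z⟩
      apply GHom.ext'
      show -ξ x y z + (η x (y + z) + -ξ y z x) = η x y + (-ξ y x z + η x z)
      linear_combination (norm := abel1)
        -hS2 y z x + hS3 x (y + z) - hS3 x y - hS3 x z
    hexagon_reverse := by
      rintro ⟨x⟩ ⟨y⟩ ⟨z⟩
      apply GHom.ext'
      show ξ x y z + (η (x + y) z + ξ z x y) = η y z + (ξ x z y + η x z)
      linear_combination (norm := abel1) hS2 x y z
    symmetry a b := GHom.ext' (hS3 a.base b.base) }

/-- `𝒮` is a symmetric monoidal category with the given monoidal structure and with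
symmetry `(x+y, η(x,y))`; moreover it is a symmetric categorical group: every morphism
is invertible and every object has a tensor-inverse. -/
theorem gObj_symmetricCategoricalGroup [AddCommGroup A] [AddCommGroup M]
    (ξ : A → A → A → M) (η : A → A → M)
    (hξnorm : ∀ x y z : A, ξ 0 y z = 0 ∧ ξ x 0 z = 0 ∧ ξ x y 0 = 0)
    (hS1 : ∀ x y z t : A,
      ξ y z t - ξ (x + y) z t + ξ x (y + z) t - ξ x y (z + t) + ξ x y z = 0)
    (hS2 : ∀ x y z : A,
      ξ x y z - ξ x z y + ξ z x y + η (x + y) z - η x z - η y z = 0)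
    (hS3 : ∀ x y : A, η x y + η y x = 0) :
    (∃ inst : MonoidalCategory (GObj A M),
      inst.toMonoidalCategoryStruct = gAddStruct A M ξ ∧
      (letI := inst
       ∃ sinst : SymmetricCategory (GObj A M),
         ∀ a b : GObj A M, GHom.val (sinst.braiding a b).hom = η a.base b.base)) ∧
    (∀ (a b : GObj A M) (f : a ⟶ b), IsIso f) ∧
    (∀ a : GObj A M,
      (gAddStruct A M ξ).tensorObj a ⟨-a.base⟩ = (⟨0⟩ : GObj A M)) := by
  have hξ : ∀ x z : A, ξ x 0 z = 0 := fun x z => (hξnorm x 0 z).2.1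
  exact ⟨⟨gMonoidalCategory ξ hξ hS1, rfl, gSymmetricCategory ξ η hξ hS1 hS2 hS3,
    fun _ _ => rfl⟩, fun _ _ f => GObj.isIso f,
    fun a => congrArg GObj.mk (add_neg_cancel a.base)⟩
end

section
/- Every strong monoidal functor is monoidally isomorphic to one that strictly preserves the unit: given monoidal categories C, D and a strong monoidal functor F : C ⥤ D with unit isomorphism ε : 𝟙_D ≅ F(𝟙_C), there exist a strong monoidal functor F' : C ⥤ D with F'(𝟙_C) = 𝟙_D and whose unit isomorphism is the identity (transported along this equality of objects), and a monoidal natural isomorphism θ : F ≅ F'. -/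
/-!
Redefine `F` on the single object `𝟙_ C` to take the value `𝟙_ D`, conjugating morphisms by `ε`,
and transport the monoidal structure along the resulting isomorphism `θ`. The transported unit is
`ε ≫ θ_𝟙 = ε ≫ ε⁻¹`, the identity.
-/

open CategoryTheory MonoidalCategory

lemma CategoryTheory.Functor.exists_iso_obj_eq {C D : Type*} [Category C] [Category D]
    (F : C ⥤ D) {X : C} {Y : D} (e : F.obj X ≅ Y) :
    ∃ (F' : C ⥤ D) (θ : F ≅ F') (h : F'.obj X = Y), θ.hom.app X = e.hom ≫ eqToHom h.symm := by
  classical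
  let obj : C → D := fun Z => if Z = X then Y else F.obj Z
  have hobj : obj X = Y := if_pos rfl
  let e' : ∀ Z, F.obj Z ≅ obj Z := fun Z =>
    if h : Z = X then h ▸ e ≪≫ eqToIso hobj.symm else eqToIso (if_neg h).symm
  exact ⟨F.copyObj obj e', F.isoCopyObj obj e', hobj, congrArg Iso.hom (dif_pos rfl)⟩

theorem strong_monoidal_functor_normalize_unit
    (C D : Type*) [Category C] [Category D]
    [MonoidalCategory C] [MonoidalCategory D]
    (F : C ⥤ D) [F.Monoidal] :
    ∃ (F' : C ⥤ D) (instF' : F'.Monoidal),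
      letI := instF'
      ∃ h : F'.obj (𝟙_ C) = 𝟙_ D,
        Functor.LaxMonoidal.ε F' = eqToHom h.symm ∧
        ∃ θ : F ≅ F', NatTrans.IsMonoidal θ.hom := by
  obtain ⟨F', θ, h, hθ⟩ := F.exists_iso_obj_eq (Functor.Monoidal.εIso F).symm
  let instF' : F'.Monoidal := Functor.Monoidal.transport θ
  refine ⟨F', instF', h, ?_, θ, Functor.Monoidal.natTransIsMonoidal_of_transport θ⟩
  rw [Functor.Monoidal.transport_ε, hθ]
  simp
end
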